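/- arXiv:2504.06695 — 5 statements merged into one kernel-verified Lean document; each statement's English description precedes it below -/
import Mathlib

section
/- Let E be a finite-dimensional real vector space, let C be a nonzero nondegenerate cone of E, and let u be a linear endomorphism of E such that u(C) ⊆ C. Then u has an eigenvector in C, and its associated eigenvalue is nonnegative; that is, there exist a vector x ∈ C with x ≠ 0 and a real number λ ≥ 0 such that u(x) = λ·x. -/
/-- A *cone* in a real topological vector space: a closed subset containing `0`,
stable under addition and under multiplication by positive scalars. -/
def IsCone {E : Type*} [NormedAddCommGroup E] [NormedSpace ℝ E] (C : Set E) : Prop :=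
  IsClosed C ∧ (0 : E) ∈ C ∧ (∀ x ∈ C, ∀ y ∈ C, x + y ∈ C) ∧
    ∀ t : ℝ, 0 < t → ∀ x ∈ C, t • x ∈ C

section helpers
variable {E : Type*} [NormedAddCommGroup E] [NormedSpace ℝ E]

lemma IsCone.smul_mem {C : Set E} (hC : IsCone C) {t : ℝ} (ht : 0 ≤ t) {x : E}
    (hx : x ∈ C) : t • x ∈ C := by
  rcases ht.lt_or_eq with h | h
  · exact hC.2.2.2 t h x hx
  · simp [← h, hC.2.1]

lemma IsCone.add_mem {C : Set E} (hC : IsCone C) {x y : E} (hx : x ∈ C) (hy : y ∈ C) :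
    x + y ∈ C := hC.2.2.1 x hx y hy

lemma IsCone.convex {C : Set E} (hC : IsCone C) : Convex ℝ C := by
  intro x hx y hy a b ha hb _
  exact hC.add_mem (hC.smul_mem ha hx) (hC.smul_mem hb hy)

lemma IsCone.sum_mem {C : Set E} (hC : IsCone C) {ι : Type*} (s : Finset ι) {g : ι → E}
    (hg : ∀ i ∈ s, g i ∈ C) : ∑ i ∈ s, g i ∈ C := by
  classical
  induction s using Finset.induction with
  | empty => simpa using hC.2.1
  | insert k t hki ih =>
    rw [Finset.sum_insert hki]
    exact hC.add_mem (hg k (Finset.mem_insert_self k t))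
      (ih fun i hi => hg i (Finset.mem_insert_of_mem hi))

variable [FiniteDimensional ℝ E]

/-- A nondegenerate closed cone admits a strictly positive continuous linear functional. -/
lemma exists_strict_functional {C : Set E} (hC : IsCone C) (hnondeg : C ∩ (-C) = {0}) :
    ∃ f : E →L[ℝ] ℝ, (∀ x ∈ C, 0 ≤ f x) ∧ (∀ x ∈ C, x ≠ 0 → 0 < f x) := by
  classical
  set S : Set E := C ∩ Metric.sphere 0 1 with hS
  have hScpt : IsCompact S := (isCompact_sphere (0:E) 1).inter_left hC.1
  -- for each point of S, a functional nonneg on C and positive at that point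
  have key : ∀ x : S, ∃ g : E →L[ℝ] ℝ, (∀ a ∈ C, 0 ≤ g a) ∧ 0 < g (x : E) := by
    rintro ⟨x, hxC, hxS⟩
    have hxne : x ≠ 0 := by
      intro h; rw [h] at hxS; simp at hxS
    have hnx : -x ∉ C := by
      intro h
      have : x ∈ C ∩ (-C) := ⟨hxC, by simpa using h⟩
      rw [hnondeg] at this
      exact hxne this
    obtain ⟨f, s, hfs, hsx⟩ := geometric_hahn_banach_closed_point hC.convex hC.1 hnx
    have hs0 : 0 < s := by simpa using hfs 0 hC.2.1
    have hfC : ∀ a ∈ C, f a ≤ 0 := by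
      intro a ha
      by_contra h
      push_neg at h
      obtain ⟨t, hts⟩ := exists_nat_gt (s / f a)
      have ht' : (0:ℝ) < (t:ℝ) + 1 := by positivity
      have := hfs (((t:ℝ)+1) • a) (hC.2.2.2 _ ht' a ha)
      rw [map_smul] at this
      have : ((t:ℝ)+1) * f a < s := this
      have hd : s / f a < (t:ℝ) + 1 := lt_of_lt_of_le hts (by linarith)
      nlinarith [(div_lt_iff₀ h).mp hd]
    refine ⟨-f, fun a ha => by simpa using hfC a ha, ?_⟩
    have : s < f (-x) := hsx
    rw [map_neg] at this
    simp only [ContinuousLinearMap.neg_apply]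
    linarith
  choose g hg1 hg2 using key
  -- finite subcover
  have hcover : S ⊆ ⋃ i : S, {y | 0 < g i y} := by
    intro y hy
    exact Set.mem_iUnion.2 ⟨⟨y, hy⟩, hg2 ⟨y, hy⟩⟩
  obtain ⟨T, hT⟩ := hScpt.elim_finite_subcover (fun i : S => {y | 0 < g i y})
    (fun i => isOpen_lt continuous_const (g i).continuous) hcover
  refine ⟨∑ i ∈ T, g i, ?_, ?_⟩
  · intro x hx
    simp only [ContinuousLinearMap.coe_sum', Finset.sum_apply]
    exact Finset.sum_nonneg fun i _ => hg1 i x hx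
  · intro x hxC hxne
    have hnorm : ‖x‖ ≠ 0 := norm_ne_zero_iff.2 hxne
    set y := ‖x‖⁻¹ • x with hy
    have hyS : y ∈ S := by
      refine ⟨hC.2.2.2 _ (by positivity) x hxC, ?_⟩
      simp [hy, norm_smul, abs_of_nonneg (inv_nonneg.2 (norm_nonneg x)), hnorm,
        inv_mul_cancel₀ hnorm]
    obtain ⟨i, hiT, hiy⟩ := Set.mem_iUnion₂.mp (hT hyS)
    have hpos : 0 < (∑ i ∈ T, g i) y := by
      simp only [ContinuousLinearMap.coe_sum', Finset.sum_apply]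
      exact Finset.sum_pos' (fun j _ => hg1 j y hyS.1) ⟨i, hiT, hiy⟩
    have hxy : x = ‖x‖ • y := by
      rw [hy, smul_smul, mul_inv_cancel₀ hnorm, one_smul]
    rw [hxy, map_smul]
    have : 0 < ‖x‖ := by positivity
    positivity

end helpers
section helpers2
variable {E : Type*} [NormedAddCommGroup E] [NormedSpace ℝ E] [FiniteDimensional ℝ E]

lemma exists_quasi_interior {C : Set E} (hC : IsCone C) (hnonzero : ∃ x ∈ C, x ≠ 0) :
    ∃ e ∈ C, e ≠ 0 ∧ ∀ z ∈ Submodule.span ℝ C, ∃ δ : ℝ, 0 < δ ∧ e - δ • z ∈ C := by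
  classical
  obtain ⟨b, hbC, hbspan, hbind⟩ := exists_linearIndependent ℝ C
  have hfin : b.Finite := hbind.setFinite
  haveI : Fintype ↥b := hfin.fintype
  set e : E := ∑ i : ↥b, (i : E) with he
  have heC : e ∈ C := hC.sum_mem _ fun i _ => hbC i.2
  have hbne : b.Nonempty := by
    by_contra h
    rw [Set.not_nonempty_iff_eq_empty] at h
    obtain ⟨x, hxC, hxne⟩ := hnonzero
    have : x ∈ Submodule.span ℝ C := Submodule.subset_span hxC
    rw [← hbspan, h] at this
    simp only [Submodule.span_empty, Submodule.mem_bot] at this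
    exact hxne this
  have hene : e ≠ 0 := by
    intro h
    obtain ⟨x₀, hx₀⟩ := hbne
    have := linearIndependent_iff'.mp hbind Finset.univ (fun _ => 1)
      (by simpa [he] using h) ⟨x₀, hx₀⟩ (Finset.mem_univ _)
    exact one_ne_zero this
  -- shrink lemma
  have shrink : ∀ (z : E) (δ δ' : ℝ), 0 < δ' → δ' ≤ δ → e - δ • z ∈ C → e - δ' • z ∈ C := by
    intro z δ δ' hδ' hle hmem
    have hδ : 0 < δ := lt_of_lt_of_le hδ' hle
    have h1 : (δ' / δ) • (e - δ • z) + (1 - δ' / δ) • e ∈ C := by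
      refine hC.add_mem (hC.smul_mem (by positivity) hmem) (hC.smul_mem ?_ heC)
      have : δ' / δ ≤ 1 := by rw [div_le_one hδ]; exact hle
      linarith
    have h2 : (δ' / δ) • (e - δ • z) + (1 - δ' / δ) • e = e - δ' • z := by
      have hne : δ ≠ 0 := ne_of_gt hδ
      have hc : δ' / δ * δ = δ' := div_mul_cancel₀ δ' hne
      rw [smul_sub, smul_smul, hc]
      module
    rwa [h2] at h1
  refine ⟨e, heC, hene, ?_⟩
  intro z hz
  rw [← hbspan] at hz
  -- strengthen: both signs
  suffices h : ∃ δ : ℝ, 0 < δ ∧ e - δ • z ∈ C ∧ e + δ • z ∈ C by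
    obtain ⟨δ, h1, h2, _⟩ := h
    exact ⟨δ, h1, h2⟩
  induction hz using Submodule.span_induction with
  | mem x hx =>
    refine ⟨1/2, by norm_num, ?_, ?_⟩
    · have h0 : (x : E) + ∑ i ∈ Finset.univ.erase (⟨x, hx⟩ : ↥b), (i : E) = e :=
        Finset.add_sum_erase Finset.univ (fun i : ↥b => (i : E)) (Finset.mem_univ (⟨x, hx⟩ : ↥b))
      have heq : e - (1/2 : ℝ) • x
          = (1/2 : ℝ) • x + ∑ i ∈ Finset.univ.erase (⟨x, hx⟩ : ↥b), (i : E) := by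
        rw [← h0]; module
      rw [heq]
      exact hC.add_mem (hC.smul_mem (by norm_num) (hbC hx))
        (hC.sum_mem _ fun i _ => hbC i.2)
    · exact hC.add_mem heC (hC.smul_mem (by norm_num) (hbC hx))
  | zero => exact ⟨1, one_pos, by simpa using heC, by simpa using heC⟩
  | add x y hx hy ihx ihy =>
    obtain ⟨δ₁, hδ₁, h1m, h1p⟩ := ihx
    obtain ⟨δ₂, hδ₂, h2m, h2p⟩ := ihy
    set δ := min δ₁ δ₂ with hδdef
    have hδ : 0 < δ := lt_min hδ₁ hδ₂
    have hxm := shrink x δ₁ δ hδ (min_le_left _ _) h1m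
    have hym := shrink y δ₂ δ hδ (min_le_right _ _) h2m
    have hxp := shrink (-x) δ₁ δ hδ (min_le_left _ _) (by simpa using h1p)
    have hyp := shrink (-y) δ₂ δ hδ (min_le_right _ _) (by simpa using h2p)
    refine ⟨δ/2, by positivity, ?_, ?_⟩
    · have : e - (δ/2) • (x + y) = (1/2 : ℝ) • (e - δ • x) + (1/2 : ℝ) • (e - δ • y) := by
        module
      rw [this]
      exact hC.add_mem (hC.smul_mem (by norm_num) hxm) (hC.smul_mem (by norm_num) hym)
    · have : e + (δ/2) • (x + y) = (1/2 : ℝ) • (e - δ • (-x)) + (1/2 : ℝ) • (e - δ • (-y)) := by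
        module
      rw [this]
      exact hC.add_mem (hC.smul_mem (by norm_num) hxp) (hC.smul_mem (by norm_num) hyp)
  | smul a x hx ihx =>
    obtain ⟨δ, hδ, hm, hp⟩ := ihx
    rcases lt_trichotomy a 0 with ha | ha | ha
    · have hna : (0:ℝ) < -a := by linarith
      have hkey : δ / (-a) * a = -δ := by
        rw [div_mul_eq_mul_div, div_eq_iff (ne_of_gt hna)]; ring
      refine ⟨δ / (-a), div_pos hδ hna, ?_, ?_⟩
      · have h1 : e - (δ / (-a)) • (a • x) = e + δ • x := by
          rw [smul_smul, hkey]; module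
        rw [h1]; exact hp
      · have h1 : e + (δ / (-a)) • (a • x) = e - δ • x := by
          rw [smul_smul, hkey]; module
        rw [h1]; exact hm
    · exact ⟨1, one_pos, by simp [ha, heC], by simp [ha, heC]⟩
    · refine ⟨δ / a, by positivity, ?_, ?_⟩
      · have : e - (δ / a) • (a • x) = e - δ • x := by
          rw [smul_smul, div_mul_cancel₀]; exact ne_of_gt ha
        rw [this]; exact hm
      · have : e + (δ / a) • (a • x) = e + δ • x := by
          rw [smul_smul, div_mul_cancel₀]; exact ne_of_gt ha
        rw [this]; exact hp

end helpers2
section helpers3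
variable {E : Type*} [NormedAddCommGroup E] [NormedSpace ℝ E] [FiniteDimensional ℝ E]

lemma eigen_eps {C : Set E} (hC : IsCone C)
    (u : E →ₗ[ℝ] E) (hu : ∀ x ∈ C, u x ∈ C)
    (f : E →L[ℝ] ℝ) (hf0 : ∀ x ∈ C, 0 ≤ f x) (hfpos : ∀ x ∈ C, x ≠ 0 → 0 < f x)
    (e : E) (heC : e ∈ C) (hfe : 0 < f e)
    (hint : ∀ z ∈ Submodule.span ℝ C, ∃ δ : ℝ, 0 < δ ∧ e - δ • z ∈ C)
    (hKcpt : IsCompact {x ∈ C | f x = 1}) (hKne : Set.Nonempty {x ∈ C | f x = 1})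
    (ε : ℝ) (hε : 0 < ε) :
    ∃ x ∈ C, f x = 1 ∧ ∃ l : ℝ, 0 ≤ l ∧ u x + ε • e = l • x := by
  classical
  set K : Set E := {x ∈ C | f x = 1} with hKdef
  have hucont : Continuous u := u.continuous_of_finiteDimensional
  -- max of f ∘ u on K
  obtain ⟨xM, hxM, hxMmax⟩ := hKcpt.exists_isMaxOn hKne
    ((f.continuous.comp hucont).continuousOn)
  set M : ℝ := f (u xM) with hM
  set Λ : Set ℝ := {l : ℝ | 0 ≤ l ∧ ∃ x ∈ K, u x + ε • e - l • x ∈ C} with hΛdef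
  obtain ⟨x₀, hx₀⟩ := hKne
  have hΛ0 : (0 : ℝ) ∈ Λ := by
    refine ⟨le_refl 0, x₀, hx₀, ?_⟩
    simpa using hC.add_mem (hu x₀ hx₀.1) (hC.smul_mem hε.le heC)
  have hΛbdd : BddAbove Λ := by
    refine ⟨M + ε * f e, ?_⟩
    rintro l ⟨hl0, x, hxK, hxm⟩
    have h1 : 0 ≤ f (u x + ε • e - l • x) := hf0 _ hxm
    have h2 : f (u x + ε • e - l • x) = f (u x) + ε * f e - l := by
      rw [map_sub, map_add, map_smul, map_smul, hxK.2]
      simp [smul_eq_mul]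
    have h3 : f (u x) ≤ M := hxMmax hxK
    rw [h2] at h1
    linarith
  set lam : ℝ := sSup Λ with hlam
  have hlam0 : 0 ≤ lam := le_csSup hΛbdd hΛ0
  -- lam is attained
  obtain ⟨seq, _, hseqt, hseqm⟩ := exists_seq_tendsto_sSup ⟨0, hΛ0⟩ hΛbdd
  have hseq0 : ∀ n, 0 ≤ seq n := fun n => (hseqm n).1
  choose xs hxsK hxsm using fun n => (hseqm n).2
  obtain ⟨xst, hxstK, φ, hφ, hxst⟩ := hKcpt.tendsto_subseq hxsK
  have hφt : Filter.Tendsto φ Filter.atTop Filter.atTop := hφ.tendsto_atTop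
  have hyC : u xst + ε • e - lam • xst ∈ C := by
    have htend : Filter.Tendsto
        (fun n => u (xs (φ n)) + ε • e - seq (φ n) • xs (φ n)) Filter.atTop
        (nhds (u xst + ε • e - lam • xst)) := by
      have h1 : Filter.Tendsto (fun n => xs (φ n)) Filter.atTop (nhds xst) := hxst
      have h2 : Filter.Tendsto (fun n => seq (φ n)) Filter.atTop (nhds lam) :=
        hseqt.comp hφt
      exact ((hucont.continuousAt.tendsto.comp h1).add tendsto_const_nhds).sub
        (h2.smul h1)
    exact hC.1.mem_of_tendsto htend (Filter.Eventually.of_forall fun n => hxsm (φ n))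
  set y : E := u xst + ε • e - lam • xst with hydef
  by_cases hyzero : y = 0
  · refine ⟨xst, hxstK.1, hxstK.2, lam, hlam0, ?_⟩
    exact sub_eq_zero.mp (show u xst + ε • e - lam • xst = 0 from hyzero)
  · -- contradiction
    exfalso
    have hfy : 0 < f y := hfpos y hyC hyzero
    set w : E := u xst + ε • e with hwdef
    have hwC : w ∈ C := hC.add_mem (hu xst hxstK.1) (hC.smul_mem hε.le heC)
    set c : ℝ := f w with hcdef
    have hc_pos : 0 < c := by
      have : c = f (u xst) + ε * f e := by
        rw [hcdef, hwdef, map_add, map_smul, smul_eq_mul]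
      nlinarith [hf0 _ (hu xst hxstK.1)]
    have hcne : c ≠ 0 := ne_of_gt hc_pos
    set x' : E := c⁻¹ • w with hx'def
    have hx'C : x' ∈ C := hC.smul_mem (by positivity) hwC
    have hfx' : f x' = 1 := by
      rw [hx'def, map_smul, smul_eq_mul, ← hcdef, inv_mul_cancel₀ hcne]
    have hx'K : x' ∈ K := ⟨hx'C, hfx'⟩
    have hcval : c = f y + lam := by
      have : f y = f w - lam * f xst := by
        rw [hydef, hwdef]
        rw [map_sub, map_smul, smul_eq_mul]
      rw [this, hxstK.2, ← hcdef]; ring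
    have hw_y : w = y + lam • xst := by rw [hydef, hwdef]; module
    have huw : u w = u y + lam • u xst := by rw [hw_y, map_add, map_smul]
    have hy2 : y = u xst + ε • e - lam • xst := by rw [hydef, hwdef]
    have hkey : u w + (ε * c) • e - lam • w = u y + (ε * f y) • e := by
      rw [huw, hcval, hw_y, hy2]
      module
    obtain ⟨δ₀, hδ₀, hδ₀m⟩ := hint x' (Submodule.subset_span hx'C)
    have hm1 : u y + (ε * f y) • (e - δ₀ • x') ∈ C :=
      hC.add_mem (hu y hyC) (hC.smul_mem (by positivity) hδ₀m)
    set l' : ℝ := lam + c⁻¹ * (ε * f y * δ₀) with hl'def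
    have hident : u x' + ε • e - l' • x' = c⁻¹ • (u y + (ε * f y) • (e - δ₀ • x')) := by
      have hrhs : u y + (ε * f y) • (e - δ₀ • x') =
          (u w + (ε * c) • e - lam • w) - (ε * f y * δ₀) • x' := by
        rw [hkey]; module
      rw [hrhs, hx'def, map_smul, hl'def]
      match_scalars <;> field_simp <;> ring
    have hl'Λ : l' ∈ Λ := by
      refine ⟨by positivity, x', hx'K, ?_⟩
      rw [hident]
      exact hC.smul_mem (by positivity) hm1
    have : l' ≤ lam := le_csSup hΛbdd hl'Λ
    have hpos : 0 < c⁻¹ * (ε * f y * δ₀) := by positivity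
    rw [hl'def] at this
    linarith

end helpers3
/-- Weak form of Birkhoff's theorem: an endomorphism leaving invariant a nonzero
nondegenerate cone of a finite-dimensional real vector space has an eigenvector in that
cone, with nonnegative eigenvalue. -/
theorem weak_birkhoff {E : Type*} [NormedAddCommGroup E] [NormedSpace ℝ E]
    [FiniteDimensional ℝ E] (C : Set E) (hC : IsCone C)
    (hnonzero : ∃ x ∈ C, x ≠ 0) (hnondeg : C ∩ (-C) = {0})
    (u : E →ₗ[ℝ] E) (hu : u '' C ⊆ C) :
    ∃ x ∈ C, x ≠ 0 ∧ ∃ l : ℝ, 0 ≤ l ∧ u x = l • x := by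
  classical
  obtain ⟨f, hf0, hfpos⟩ := exists_strict_functional hC hnondeg
  obtain ⟨e, heC, hene, hint⟩ := exists_quasi_interior hC hnonzero
  have hfe : 0 < f e := hfpos e heC hene
  have hu' : ∀ x ∈ C, u x ∈ C := fun x hx => hu ⟨x, hx, rfl⟩
  have hucont : Continuous u := u.continuous_of_finiteDimensional
  obtain ⟨x₁, hx₁C, hx₁ne⟩ := hnonzero
  have hnx₁ : ‖x₁‖ ≠ 0 := norm_ne_zero_iff.2 hx₁ne
  -- lower bound for f on C
  have hSne : (C ∩ Metric.sphere 0 1).Nonempty := by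
    refine ⟨‖x₁‖⁻¹ • x₁, hC.smul_mem (by positivity) hx₁C, ?_⟩
    rw [mem_sphere_zero_iff_norm, norm_smul, norm_inv, norm_norm,
      inv_mul_cancel₀ hnx₁]
  have hScpt : IsCompact (C ∩ Metric.sphere 0 1) :=
    (isCompact_sphere (0:E) 1).inter_left hC.1
  obtain ⟨xm, hxm, hxmmin⟩ := hScpt.exists_isMinOn hSne f.continuous.continuousOn
  have hxmne : xm ≠ 0 := by
    intro h
    have := hxm.2
    rw [h, mem_sphere_zero_iff_norm] at this
    simp at this
  have hm0 : 0 < f xm := hfpos _ hxm.1 hxmne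
  have hlow : ∀ x ∈ C, f xm * ‖x‖ ≤ f x := by
    intro x hxC
    rcases eq_or_ne x 0 with rfl | hxne
    · simp
    · have hnx : ‖x‖ ≠ 0 := norm_ne_zero_iff.2 hxne
      have hyS : ‖x‖⁻¹ • x ∈ C ∩ Metric.sphere 0 1 := by
        refine ⟨hC.smul_mem (by positivity) hxC, ?_⟩
        rw [mem_sphere_zero_iff_norm, norm_smul, norm_inv, norm_norm,
          inv_mul_cancel₀ hnx]
      have h1 : f xm ≤ f (‖x‖⁻¹ • x) := hxmmin hyS
      rw [map_smul, smul_eq_mul] at h1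
      have h2 : ‖x‖ * f xm ≤ ‖x‖ * (‖x‖⁻¹ * f x) := by
        apply mul_le_mul_of_nonneg_left h1 (norm_nonneg x)
      rw [← mul_assoc, mul_inv_cancel₀ hnx, one_mul] at h2
      linarith
  -- K is compact and nonempty
  have hKclosed : IsClosed {x ∈ C | f x = 1} :=
    hC.1.inter (isClosed_eq f.continuous continuous_const)
  have hKcpt : IsCompact {x ∈ C | f x = 1} := by
    refine Metric.isCompact_of_isClosed_isBounded hKclosed
      (isBounded_iff_forall_norm_le.2 ⟨(f xm)⁻¹, ?_⟩)
    rintro x ⟨hxC, hfx⟩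
    have h := hlow x hxC
    rw [hfx] at h
    calc ‖x‖ = (f xm)⁻¹ * (f xm * ‖x‖) := by field_simp
    _ ≤ (f xm)⁻¹ * 1 := mul_le_mul_of_nonneg_left h (by positivity)
    _ = (f xm)⁻¹ := mul_one _
  have hKne : Set.Nonempty {x ∈ C | f x = 1} := by
    have hfx₁ : 0 < f x₁ := hfpos _ hx₁C hx₁ne
    refine ⟨(f x₁)⁻¹ • x₁, hC.smul_mem (by positivity) hx₁C, ?_⟩
    rw [map_smul, smul_eq_mul, inv_mul_cancel₀ (ne_of_gt hfx₁)]
  -- apply eigen_eps for ε = 1/(n+1)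
  choose xs hxsC hxsf ls hls0 hlse using fun n : ℕ =>
    eigen_eps hC u hu' f hf0 hfpos e heC hfe hint hKcpt hKne ((n:ℝ)+1)⁻¹ (by positivity)
  have hxsK : ∀ n, xs n ∈ {x ∈ C | f x = 1} := fun n => ⟨hxsC n, hxsf n⟩
  obtain ⟨xi, hxiK, φ, hφ, hxit⟩ := hKcpt.tendsto_subseq hxsK
  have hφt : Filter.Tendsto φ Filter.atTop Filter.atTop := hφ.tendsto_atTop
  have hbase : Filter.Tendsto (fun n : ℕ => ((n:ℝ)+1)⁻¹) Filter.atTop (nhds 0) := by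
    simpa [one_div] using tendsto_one_div_add_atTop_nhds_zero_nat (𝕜 := ℝ)
  have hεt : Filter.Tendsto (fun k => ((φ k : ℝ)+1)⁻¹) Filter.atTop (nhds 0) :=
    hbase.comp hφt
  have hut : Filter.Tendsto (fun k => u (xs (φ k))) Filter.atTop (nhds (u xi)) :=
    (hucont.continuousAt.tendsto).comp hxit
  -- value of ls
  have hlsval : ∀ n, ls n = f (u (xs n)) + ((n:ℝ)+1)⁻¹ * f e := by
    intro n
    have h := congrArg f (hlse n)
    rw [map_add, map_smul, map_smul, smul_eq_mul, smul_eq_mul, hxsf n, mul_one] at h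
    linarith
  have hlst : Filter.Tendsto (fun k => ls (φ k)) Filter.atTop (nhds (f (u xi))) := by
    have h1 : Filter.Tendsto (fun k => f (u (xs (φ k))) + ((φ k : ℝ)+1)⁻¹ * f e)
        Filter.atTop (nhds (f (u xi) + 0 * f e)) :=
      ((f.continuous.continuousAt.tendsto).comp hut).add (hεt.mul_const (f e))
    rw [zero_mul, add_zero] at h1
    exact h1.congr fun k => (hlsval (φ k)).symm
  have hLHS : Filter.Tendsto (fun k => u (xs (φ k)) + ((φ k : ℝ)+1)⁻¹ • e)
      Filter.atTop (nhds (u xi)) := by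
    have := hut.add (hεt.smul_const e)
    simpa using this
  have hRHS : Filter.Tendsto (fun k => u (xs (φ k)) + ((φ k : ℝ)+1)⁻¹ • e)
      Filter.atTop (nhds (f (u xi) • xi)) := by
    have h1 : Filter.Tendsto (fun k => ls (φ k) • xs (φ k)) Filter.atTop
        (nhds (f (u xi) • xi)) := hlst.smul hxit
    exact h1.congr fun k => (hlse (φ k)).symm
  have heig : u xi = f (u xi) • xi := tendsto_nhds_unique hLHS hRHS
  have hxine : xi ≠ 0 := by
    intro h
    have := hxiK.2
    rw [h, map_zero] at this
    exact one_ne_zero this.symm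
  exact ⟨xi, hxiK.1, hxine, f (u xi), hf0 _ (hu' _ hxiK.1), heig⟩
end

section
/- Let E be a finite-dimensional real vector space and C a cone of E. Then the set {φ ∈ E' : φ(x) > 0 for every x ∈ C with x ≠ 0} is an open subset of the dual space E'. -/
/-!
A form positive on the nonzero vectors of a cone is positive on its trace on the unit sphere,
and conversely by homogeneity. In finite dimension that trace is compact, and by the tube lemma
the forms positive on a fixed compact set form an open set.
-/

open Metric Function

theorem IsCompact.isOpen_setOf_forall_mem {X Y Z : Type*} [TopologicalSpace X]
    [TopologicalSpace Y] [TopologicalSpace Z] {f : X → Y → Z} (hf : Continuous (uncurry f))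
    {K : Set Y} (hK : IsCompact K) {U : Set Z} (hU : IsOpen U) :
    IsOpen {x | ∀ y ∈ K, f x y ∈ U} := by
  refine isOpen_iff_eventually.2 fun x hx ↦ hK.eventually_forall_of_forall_eventually ?_
  exact fun y hy ↦ hf.continuousAt.eventually (hU.mem_nhds (hx y hy))

theorem forall_ne_zero_pos_iff_forall_mem_sphere {E : Type*} [NormedAddCommGroup E]
    [NormedSpace ℝ E] {C : Set E} (hC : ∀ t : ℝ, 0 < t → ∀ x ∈ C, t • x ∈ C) (φ : E →L[ℝ] ℝ) :
    (∀ x ∈ C, x ≠ 0 → 0 < φ x) ↔ ∀ x ∈ C ∩ sphere 0 1, 0 < φ x := by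
  refine ⟨fun h x ⟨hxC, hx1⟩ ↦ h x hxC (ne_zero_of_mem_unit_sphere ⟨x, hx1⟩), fun h x hxC hx0 ↦ ?_⟩
  have hnorm : 0 < ‖x‖ := norm_pos_iff.2 hx0
  have hunit : ‖x‖⁻¹ • x ∈ C ∩ sphere 0 1 :=
    ⟨hC _ (inv_pos.2 hnorm) x hxC, by simp [norm_smul, hnorm.ne']⟩
  have hpos := h _ hunit
  rw [map_smul, smul_eq_mul] at hpos
  exact pos_of_mul_pos_right hpos (inv_nonneg.2 hnorm.le)

/-- For a cone `C` of a finite-dimensional real vector space `E`, the set of linear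
forms that are positive on every nonzero vector of `C` is open in the dual space. -/
theorem positive_forms_open {E : Type*} [NormedAddCommGroup E] [NormedSpace ℝ E]
    [FiniteDimensional ℝ E] (C : Set E) (hC : IsCone C) :
    IsOpen {φ : E →L[ℝ] ℝ | ∀ x ∈ C, x ≠ 0 → 0 < φ x} := by
  have hK : IsCompact (C ∩ sphere 0 1) := (isCompact_sphere 0 1).inter_left hC.1
  simp_rw [forall_ne_zero_pos_iff_forall_mem_sphere hC.2.2.2]
  exact hK.isOpen_setOf_forall_mem (f := fun (φ : E →L[ℝ] ℝ) x ↦ φ x)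
    isBoundedBilinearMap_apply.continuous isOpen_Ioi
end

section
/- Let E be a finite-dimensional real vector space, C a nonzero cone of E, and u a linear endomorphism of E such that u(x) ≠ 0 for every x ∈ C with x ≠ 0. Then the image u(C) is a nonzero cone of E; in particular, u(C) is closed in E. -/
open Metric

section

variable {E F : Type*} [NormedAddCommGroup E] [NormedAddCommGroup F]

lemma exists_pos_mul_norm_le_norm_apply [NormedSpace ℝ E] [NormedSpace ℝ F] [ProperSpace E]
    {C : Set E} (hC : IsClosed C) (hsmul : ∀ t : ℝ, 0 < t → ∀ x ∈ C, t • x ∈ C)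
    (u : E →L[ℝ] F) (hu : ∀ x ∈ C, x ≠ 0 → u x ≠ 0) :
    ∃ c > 0, ∀ x ∈ C, c * ‖x‖ ≤ ‖u x‖ := by
  have hS : IsCompact (C ∩ sphere 0 1) := (isCompact_sphere 0 1).inter_left hC
  have hpos : ∀ x ∈ C ∩ sphere 0 1, 0 < ‖u x‖ := fun x hx =>
    norm_pos_iff.mpr (hu x hx.1 (ne_zero_of_mem_unit_sphere ⟨x, hx.2⟩))
  obtain ⟨c, hc, hcS⟩ := hS.exists_forall_le' (by fun_prop) hpos
  refine ⟨c, hc, fun x hx => ?_⟩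
  rcases eq_or_ne x 0 with rfl | hx0
  · simp
  have hnorm : 0 < ‖x‖ := norm_pos_iff.mpr hx0
  have hunit : ‖x‖⁻¹ • x ∈ C ∩ sphere 0 1 :=
    ⟨hsmul _ (inv_pos.mpr hnorm) x hx, by simp [norm_smul, hnorm.ne']⟩
  have hcx := hcS _ hunit
  rwa [map_smul, norm_smul, norm_inv, norm_norm, inv_mul_eq_div, le_div_iff₀ hnorm] at hcx

lemma IsClosed.image_of_mul_norm_le_norm [ProperSpace E] {C : Set E} (hC : IsClosed C)
    {f : E → F} (hf : Continuous f) {c : ℝ} (hc : 0 < c)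
    (hbound : ∀ x ∈ C, c * ‖x‖ ≤ ‖f x‖) :
    IsClosed (f '' C) := by
  refine isClosed_of_closure_subset fun y hy => ?_
  set K := C ∩ f ⁻¹' closedBall y 1
  have hK_bdd : K ⊆ closedBall 0 ((‖y‖ + 1) / c) := fun x hx => by
    have hfx : ‖f x‖ ≤ ‖y‖ + 1 := by
      linarith [norm_le_norm_add_norm_sub' (f x) y, mem_closedBall_iff_norm.mp hx.2]
    rw [mem_closedBall_zero_iff, le_div_iff₀ hc, mul_comm]
    exact (hbound x hx.1).trans hfx
  have hK : IsCompact K :=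
    isCompact_of_isClosed_isBounded (hC.inter (isClosed_closedBall.preimage hf))
      (isBounded_closedBall.subset hK_bdd)
  have hnear : f '' C ∩ ball y 1 ⊆ f '' K := by
    rintro _ ⟨⟨x, hx, rfl⟩, hxy⟩
    exact ⟨x, ⟨hx, ball_subset_closedBall hxy⟩, rfl⟩
  have hy' : y ∈ closure (f '' K) :=
    closure_mono hnear (isOpen_ball.closure_inter ⟨hy, mem_ball_self one_pos⟩)
  exact Set.image_mono Set.inter_subset_left ((hK.image hf).isClosed.closure_subset hy')

lemma IsCone.image [NormedSpace ℝ E] [NormedSpace ℝ F] {C : Set E} (hC : IsCone C)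
    (u : E →ₗ[ℝ] F) (hclosed : IsClosed (u '' C)) :
    IsCone (u '' C) := by
  obtain ⟨-, h0, hadd, hsmul⟩ := hC
  refine ⟨hclosed, ⟨0, h0, map_zero u⟩, ?_, ?_⟩
  · rintro _ ⟨a, ha, rfl⟩ _ ⟨b, hb, rfl⟩
    exact ⟨a + b, hadd a ha b hb, map_add u a b⟩
  · rintro t ht _ ⟨a, ha, rfl⟩
    exact ⟨t • a, hsmul t ht a ha, map_smul u t a⟩

end

/-- If `C` is a nonzero cone of a finite-dimensional real vector space and `u` is an
endomorphism that vanishes at no nonzero point of `C`, then `u(C)` is a nonzero cone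
(in particular it is closed). -/
theorem image_cone {E : Type*} [NormedAddCommGroup E] [NormedSpace ℝ E]
    [FiniteDimensional ℝ E] (C : Set E) (hC : IsCone C)
    (hnonzero : ∃ x ∈ C, x ≠ 0) (u : E →ₗ[ℝ] E)
    (hu : ∀ x ∈ C, x ≠ 0 → u x ≠ 0) :
    IsCone (u '' C) ∧ ∃ y ∈ u '' C, y ≠ 0 := by
  obtain ⟨c, hc, hbound⟩ :=
    exists_pos_mul_norm_le_norm_apply hC.1 hC.2.2.2 (LinearMap.toContinuousLinearMap u) hu
  have hclosed : IsClosed (u '' C) :=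
    hC.1.image_of_mul_norm_le_norm u.continuous_of_finiteDimensional hc hbound
  obtain ⟨x, hx, hx0⟩ := hnonzero
  exact ⟨hC.image u hclosed, u x, ⟨x, hx, rfl⟩, hu x hx hx0⟩
end

section
/- Let E be a real vector space of finite dimension d > 0, let q' be a nonzero positive semidefinite quadratic form on E with polar form B', let u be a q'-selfadjoint endomorphism of E, and let λ ≥ 0 be a real number such that q'(u(x)) = λ·q'(x) for all x ∈ E. Then B'(u²(x), y) = λ·B'(x, y) for all x, y ∈ E, the image of u² − λ·id is contained in the radical of B' (a proper subspace of E), and at least one of √λ and −√λ is an eigenvalue of u. -/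
/-!
Polarizing `q'(u x) = l q'(x)` gives `B'(u x, u y) = l B'(x, y)`, and self-adjointness turns the
left side into `B'(u² x, y)`. Hence `u² - l` maps into the radical of `B'`, which is proper
because `B' ≠ 0`; so `u² - l = (u - √l)(u + √l)` is not surjective, hence (in finite dimension)
not injective, and one of the two factors has a nontrivial kernel.
-/

namespace LinearMap.BilinForm

section Field

variable {R M : Type*} [Field R] [NeZero (2 : R)] [AddCommGroup M] [Module R M]
  {B : LinearMap.BilinForm R M} {u : Module.End R M} {l : R}

theorem apply_apply_left_eq_mul_of_isSymm (hB : B.IsSymm)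
    (hu : ∀ x y, B (u x) y = B x (u y)) (h : ∀ x, B (u x) (u x) = l * B x x) (x y : M) :
    B (u (u x)) y = l * B x y := by
  have hcompl : B.compl₁₂ u u = l • B :=
    ext_of_isSymm ⟨fun x y => hB.eq (u x) (u y)⟩ (hB.smul l) h
  rw [hu, ← compl₁₂_apply, hcompl]
  rfl

end Field

theorem range_mul_self_sub_smul_le_ker {R M : Type*} [CommRing R] [AddCommGroup M] [Module R M]
    {B : LinearMap.BilinForm R M} {u : Module.End R M} {l : R}
    (h : ∀ x y, B (u (u x)) y = l * B x y) :
    LinearMap.range (u * u - l • 1) ≤ LinearMap.ker B := by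
  rintro _ ⟨x, rfl⟩
  ext y
  simp [h]

end LinearMap.BilinForm

theorem Module.End.hasEigenvalue_or_hasEigenvalue_neg_of_ker_ne_bot {R M : Type*} [CommRing R]
    [AddCommGroup M] [Module R M] {u : Module.End R M} {a : R}
    (h : LinearMap.ker (u * u - (a * a) • 1) ≠ ⊥) :
    u.HasEigenvalue a ∨ u.HasEigenvalue (-a) := by
  simp only [hasEigenvalue_iff, eigenspace_def, ne_eq, LinearMap.ker_eq_bot] at h ⊢
  by_contra! hinj
  have hfactor : u * u - (a * a) • 1 = (u - a • 1) * (u - (-a) • 1) := by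
    rw [neg_smul, sub_neg_eq_add, mul_add, sub_mul, sub_mul, smul_mul_smul_comm, mul_one,
      smul_one_mul, mul_smul_one]
    abel
  exact h (hfactor ▸ hinj.1.comp hinj.2)

theorem eigenvalue_from_invariant_form_general {E : Type*} [AddCommGroup E] [Module ℝ E]
    [FiniteDimensional ℝ E]
    (q' : QuadraticForm ℝ E) (hq'ne : q' ≠ 0)
    (B' : LinearMap.BilinForm ℝ E) (hBsymm : ∀ x y : E, B' x y = B' y x)
    (hBq : ∀ x : E, B' x x = q' x)
    (u : Module.End ℝ E) (hu : ∀ x y : E, B' (u x) y = B' x (u y))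
    (l : ℝ) (hl : 0 ≤ l) (hql : ∀ x : E, q' (u x) = l * q' x) :
    (∀ x y : E, B' (u (u x)) y = l * B' x y) ∧
      LinearMap.range (u * u - l • (1 : Module.End ℝ E)) ≤ LinearMap.ker B' ∧
      LinearMap.ker B' ≠ ⊤ ∧
      (Module.End.HasEigenvalue u (Real.sqrt l) ∨
        Module.End.HasEigenvalue u (-Real.sqrt l)) := by
  have hsq : ∀ x y, B' (u (u x)) y = l * B' x y :=
    B'.apply_apply_left_eq_mul_of_isSymm ⟨hBsymm⟩ hu fun x => by rw [hBq, hBq, hql]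
  have hrange := LinearMap.BilinForm.range_mul_self_sub_smul_le_ker hsq
  have hker : LinearMap.ker B' ≠ ⊤ := fun htop =>
    hq'ne <| QuadraticMap.ext fun x => by rw [← hBq, LinearMap.ker_eq_top.1 htop]; rfl
  refine ⟨hsq, hrange, hker, Module.End.hasEigenvalue_or_hasEigenvalue_neg_of_ker_ne_bot ?_⟩
  rw [Real.mul_self_sqrt hl, ne_eq, LinearMap.ker_eq_bot_iff_range_eq_top]
  exact fun htop => hker (top_unique (htop ▸ hrange))

/-- Let `q'` be a nonzero positive semidefinite quadratic form with polar form `B'` on a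
nonzero finite-dimensional real vector space, `u` a `q'`-selfadjoint endomorphism, and
`l ≥ 0` with `q'(u x) = l • q' x` for all `x`. Then `B'(u² x, y) = l • B'(x, y)` for
all `x, y`, the range of `u² - l • id` is contained in the radical of `B'` (which is a
proper subspace of `E`), and `√l` or `-√l` is an eigenvalue of `u`. -/
theorem eigenvalue_from_invariant_form {E : Type*} [AddCommGroup E] [Module ℝ E]
    [FiniteDimensional ℝ E] (hd : 0 < Module.finrank ℝ E)
    (q' : QuadraticForm ℝ E) (hq'ne : q' ≠ 0) (hq'pos : ∀ x : E, 0 ≤ q' x)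
    (B' : LinearMap.BilinForm ℝ E) (hBsymm : ∀ x y : E, B' x y = B' y x)
    (hBq : ∀ x : E, B' x x = q' x)
    (u : Module.End ℝ E) (hu : ∀ x y : E, B' (u x) y = B' x (u y))
    (l : ℝ) (hl : 0 ≤ l) (hql : ∀ x : E, q' (u x) = l * q' x) :
    (∀ x y : E, B' (u (u x)) y = l * B' x y) ∧
      LinearMap.range (u * u - l • (1 : Module.End ℝ E)) ≤ LinearMap.ker B' ∧
      LinearMap.ker B' ≠ ⊤ ∧
      (Module.End.HasEigenvalue u (Real.sqrt l) ∨
        Module.End.HasEigenvalue u (-Real.sqrt l)) :=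
  eigenvalue_from_invariant_form_general q' hq'ne B' hBsymm hBq u hu l hl hql
end

section
/- Let E be a finite-dimensional real vector space, C a nonzero nondegenerate cone of E, and u a linear endomorphism of E with u(C) ⊆ C. Then among the nonzero cones C' ⊆ C satisfying u(C') ⊆ C', there exists one that is minimal for inclusion: a nonzero cone C' ⊆ C with u(C') ⊆ C' such that every nonzero cone C'' ⊆ C' with u(C'') ⊆ C'' equals C'. -/
/-- Given a nonzero nondegenerate cone `C` of a finite-dimensional real vector space and
an endomorphism `u` with `u(C) ⊆ C`, among the nonzero subcones of `C` invariant under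
`u` there is a minimal one for inclusion. -/
theorem exists_minimal_invariant_subcone {E : Type*} [NormedAddCommGroup E]
    [NormedSpace ℝ E] [FiniteDimensional ℝ E] (C : Set E) (hC : IsCone C)
    (hnonzero : ∃ x ∈ C, x ≠ 0) (hnondeg : C ∩ (-C) = {0})
    (u : E →ₗ[ℝ] E) (hu : u '' C ⊆ C) :
    ∃ C' : Set E, IsCone C' ∧ (∃ x ∈ C', x ≠ 0) ∧ C' ⊆ C ∧ u '' C' ⊆ C' ∧
      ∀ C'' : Set E, IsCone C'' → (∃ x ∈ C'', x ≠ 0) → C'' ⊆ C' → u '' C'' ⊆ C'' →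
        C'' = C' := by
  set S : Set (Set E) := {D | IsCone D ∧ (∃ x ∈ D, x ≠ 0) ∧ D ⊆ C ∧ u '' D ⊆ D} with hS
  have hCS : C ∈ S := ⟨hC, hnonzero, subset_rfl, hu⟩
  have key : ∀ c ⊆ S, IsChain (· ⊆ ·) c → c.Nonempty →
      ∃ lb ∈ S, ∀ s ∈ c, lb ⊆ s := by
    intro c hcS hchain hcne
    have hcone : ∀ s ∈ c, IsCone s := fun s hs => (hcS hs).1
    obtain ⟨s0, hs0⟩ := hcne
    -- nonzero: compactness of the unit sphere
    have hne : (⋂ s : c, ((s : Set E) ∩ Metric.sphere 0 1)).Nonempty := by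
      have : Nonempty c := ⟨⟨s0, hs0⟩⟩
      apply IsCompact.nonempty_iInter_of_directed_nonempty_isCompact_isClosed
      · intro s t
        rcases hchain.total s.2 t.2 with h | h
        · exact ⟨s, subset_rfl, Set.inter_subset_inter_left _ h⟩
        · exact ⟨t, Set.inter_subset_inter_left _ h, subset_rfl⟩
      · rintro ⟨s, hs⟩
        obtain ⟨x, hx, hx0⟩ := (hcS hs).2.1
        refine ⟨‖x‖⁻¹ • x, (hcone s hs).2.2.2 _ (inv_pos.mpr (norm_pos_iff.mpr hx0)) x hx, ?_⟩
        simp [norm_smul, abs_of_nonneg (norm_nonneg x),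
          inv_mul_cancel₀ (norm_ne_zero_iff.mpr hx0)]
      · exact fun s => (isCompact_sphere (0 : E) 1).inter_left (hcone s s.2).1
      · exact fun s => ((hcone s s.2).1).inter Metric.isClosed_sphere
    obtain ⟨x, hx⟩ := hne
    simp only [Set.mem_iInter, Set.mem_inter_iff] at hx
    have hxs : ∀ s ∈ c, x ∈ s := fun s hs => (hx ⟨s, hs⟩).1
    have hx0 : x ≠ 0 := by
      intro h
      have := (hx ⟨s0, hs0⟩).2
      rw [h] at this
      simp at this
    refine ⟨⋂₀ c, ⟨⟨isClosed_sInter fun s hs => (hcone s hs).1,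
      fun s hs => (hcone s hs).2.1,
      fun a ha b hb s hs => (hcone s hs).2.2.1 a (ha s hs) b (hb s hs),
      fun t ht a ha s hs => (hcone s hs).2.2.2 t ht a (ha s hs)⟩,
      ⟨x, fun s hs => hxs s hs, hx0⟩,
      (Set.sInter_subset_of_mem hs0).trans (hcS hs0).2.2.1, ?_⟩,
      fun s hs => Set.sInter_subset_of_mem hs⟩
    rintro _ ⟨a, ha, rfl⟩ s hs
    exact (hcS hs).2.2.2 ⟨a, ha s hs, rfl⟩
  obtain ⟨m, -, hmS, hmin⟩ := zorn_superset_nonempty S key C hCS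
  exact ⟨m, hmS.1, hmS.2.1, hmS.2.2.1, hmS.2.2.2,
    fun D hD hDne hDm hDu =>
      le_antisymm hDm (hmin ⟨hD, hDne, hDm.trans hmS.2.2.1, hDu⟩ hDm)⟩
end
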